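/- Let p, q, r be probability measures on a common measurable space, let γ ∈ (0, 1], ε ≥ 0, and δ ≥ 0. Suppose H_{e^ε}(q‖p) ≤ δ and H_{e^ε}(q‖r) ≤ δ, where H_α(P‖Q) = sup over measurable sets S of (P(S) − α·Q(S)). Then the pair of mixture measures ((1−γ)p + γq, (1−γ)p + γr) is (log(1 + γ(e^ε − 1)), γδ)-indistinguishable. -/
import Mathlib


open MeasureTheory

/-- `(P, Q)` are `(ε, δ)`-indistinguishable: for every measurable set `S`,
`P(S) ≤ e^ε · Q(S) + δ`. -/
def Indist {X : Type*} [MeasurableSpace X] (P Q : Measure X) (ε δ : ℝ) : Prop :=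
  ∀ S : Set X, MeasurableSet S → (P S).toReal ≤ Real.exp ε * (Q S).toReal + δ

/-- Hockey-stick divergence `H_α(P‖Q) = sup_{S measurable} (P(S) − α·Q(S))`. -/
noncomputable def hsDiv {X : Type*} [MeasurableSpace X] (α : ℝ) (P Q : Measure X) : ℝ :=
  ⨆ S : {S : Set X // MeasurableSet S}, ((P S.1).toReal - α * (Q S.1).toReal)

/-- The mixture measure `(1−γ)·p + γ·q`. -/
noncomputable def mix {X : Type*} [MeasurableSpace X] (γ : ℝ) (p q : Measure X) : Measure X :=
  ENNReal.ofReal (1 - γ) • p + ENNReal.ofReal γ • q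

lemma hsDiv_le_elim {X : Type*} [MeasurableSpace X] {α δ : ℝ} (hα : 0 ≤ α)
    (P Q : Measure X) [IsProbabilityMeasure P]
    (h : hsDiv α P Q ≤ δ) {S : Set X} (hS : MeasurableSet S) :
    (P S).toReal - α * (Q S).toReal ≤ δ := by
  rw [hsDiv] at h
  refine le_trans (le_ciSup (f := fun T : {S : Set X // MeasurableSet S} => (P T.1).toReal - α * (Q T.1).toReal) ?_ ⟨S, hS⟩) h
  refine ⟨1, ?_⟩
  rintro x ⟨⟨T, hT⟩, rfl⟩
  have h1 : (P T).toReal ≤ 1 := by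
    have := ENNReal.toReal_mono (by simp) (prob_le_one (μ := P) (s := T))
    simpa using this
  have h2 : 0 ≤ α * (Q T).toReal := mul_nonneg hα ENNReal.toReal_nonneg
  simp only []
  linarith

lemma mix_apply_toReal {X : Type*} [MeasurableSpace X] {γ : ℝ} (hγ0 : 0 ≤ γ) (hγ1 : γ ≤ 1)
    (p q : Measure X) [IsFiniteMeasure p] [IsFiniteMeasure q] (S : Set X) :
    ((mix γ p q) S).toReal = (1 - γ) * (p S).toReal + γ * (q S).toReal := by
  simp only [mix, Measure.add_apply, Measure.smul_apply, smul_eq_mul]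
  rw [ENNReal.toReal_add, ENNReal.toReal_mul, ENNReal.toReal_mul,
    ENNReal.toReal_ofReal (by linarith), ENNReal.toReal_ofReal hγ0]
  · exact ENNReal.mul_ne_top ENNReal.ofReal_ne_top (measure_ne_top p S)
  · exact ENNReal.mul_ne_top ENNReal.ofReal_ne_top (measure_ne_top q S)

/-- Amplification by mixing with a common component (Proposition 2):
if `H_{e^ε}(q‖p) ≤ δ` and `H_{e^ε}(q‖r) ≤ δ`, then the mixtures
`((1−γ)p + γq, (1−γ)p + γr)` are `(log(1 + γ(e^ε − 1)), γδ)`-indistinguishable. -/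
theorem mixture_amplification
    {X : Type*} [MeasurableSpace X] (p q r : Measure X)
    [IsProbabilityMeasure p] [IsProbabilityMeasure q] [IsProbabilityMeasure r]
    (γ ε δ : ℝ) (hγ0 : 0 < γ) (hγ1 : γ ≤ 1) (hε : 0 ≤ ε) (hδ : 0 ≤ δ)
    (hqp : hsDiv (Real.exp ε) q p ≤ δ) (hqr : hsDiv (Real.exp ε) q r ≤ δ) :
    Indist (mix γ p q) (mix γ p r) (Real.log (1 + γ * (Real.exp ε - 1))) (γ * δ) := by
  intro S hS
  set E := Real.exp ε with hE
  have hE1 : 1 ≤ E := by rw [hE]; calc (1:ℝ) = Real.exp 0 := by simp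
                                      _ ≤ Real.exp ε := Real.exp_le_exp.2 hε
  have hK : (0:ℝ) < 1 + γ * (E - 1) := by nlinarith
  have hexp : Real.exp (Real.log (1 + γ * (E - 1))) = 1 + γ * (E - 1) := Real.exp_log hK
  have h1 := hsDiv_le_elim (le_trans zero_le_one hE1) q p hqp hS
  have h2 := hsDiv_le_elim (le_trans zero_le_one hE1) q r hqr hS
  rw [mix_apply_toReal hγ0.le hγ1 p q S, mix_apply_toReal hγ0.le hγ1 p r S, hexp]
  set a := (p S).toReal
  set b := (q S).toReal
  set c := (r S).toReal
  have ha : 0 ≤ a := ENNReal.toReal_nonneg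
  have hc : 0 ≤ c := ENNReal.toReal_nonneg
  -- key inequality: b ≤ (1-γ)(E-1)a + (1+γ(E-1))c + δ
  have hEpos : (0:ℝ) < E := lt_of_lt_of_le one_pos hE1
  have key : E * b ≤ E * ((1 - γ) * (E - 1) * a + (1 + γ * (E - 1)) * c + δ) := by
    have m1 : (1 - γ) * (E - 1) * (b - E * a) ≤ (1 - γ) * (E - 1) * δ :=
      mul_le_mul_of_nonneg_left h1 (mul_nonneg (by linarith) (by linarith))
    have m2 : (1 + γ * (E - 1)) * (b - E * c) ≤ (1 + γ * (E - 1)) * δ :=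
      mul_le_mul_of_nonneg_left h2 hK.le
    nlinarith [m1, m2]
  have key' : b ≤ (1 - γ) * (E - 1) * a + (1 + γ * (E - 1)) * c + δ :=
    le_of_mul_le_mul_left key hEpos
  nlinarith [mul_le_mul_of_nonneg_left key' hγ0.le]
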